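/- Every 4×4 submatrix of the 9×4 matrix A_Q defining the Klee-Walkup polytope realization Q̃₄ is nonsingular; consequently every 3×4 submatrix of A_Q has rank 3. -/

import Mathlib

open Matrix

noncomputable section

/-- The constraint matrix of the Klee–Walkup polytope realization `Q̃₄`. -/
def AQ : Matrix (Fin 9) (Fin 4) ℝ :=
  !![3, -3, -1, -2;
     -3, 3, -1, -2;
     -2, 1, -1, -3;
     2, -1, -1, -3;
     -3, -3, 1, -2;
     3, 3, 1, -2;
     1, 2, 1, -3;
     -1, -2, 1, -3;
     0, 0, 0, 2]

/-- The right-hand side of the Klee–Walkup polytope realization `Q̃₄`. -/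
def bQ : Fin 9 → ℝ := fun _ => -1


/-- Integer version of `AQ`. -/
def AZaux : Matrix (Fin 9) (Fin 4) ℤ :=
  !![3, -3, -1, -2;
     -3, 3, -1, -2;
     -2, 1, -1, -3;
     2, -1, -1, -3;
     -3, -3, 1, -2;
     3, 3, 1, -2;
     1, 2, 1, -3;
     -1, -2, 1, -3;
     0, 0, 0, 2]

/-- Explicit integer determinant of the 4×4 submatrix of `AZaux` with rows `a b c d`. -/
def d4aux (a b c d : Fin 9) : ℤ :=
  let M := fun i j => AZaux i j
  (M a 0) * ((M b 1)*((M c 2)*(M d 3)-(M c 3)*(M d 2)) - (M b 2)*((M c 1)*(M d 3)-(M c 3)*(M d 1)) + (M b 3)*((M c 1)*(M d 2)-(M c 2)*(M d 1)))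
  - (M a 1) * ((M b 0)*((M c 2)*(M d 3)-(M c 3)*(M d 2)) - (M b 2)*((M c 0)*(M d 3)-(M c 3)*(M d 0)) + (M b 3)*((M c 0)*(M d 2)-(M c 2)*(M d 0)))
  + (M a 2) * ((M b 0)*((M c 1)*(M d 3)-(M c 3)*(M d 1)) - (M b 1)*((M c 0)*(M d 3)-(M c 3)*(M d 0)) + (M b 3)*((M c 0)*(M d 1)-(M c 1)*(M d 0)))
  - (M a 3) * ((M b 0)*((M c 1)*(M d 2)-(M c 2)*(M d 1)) - (M b 1)*((M c 0)*(M d 2)-(M c 2)*(M d 0)) + (M b 2)*((M c 0)*(M d 1)-(M c 1)*(M d 0)))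

theorem d4aux_ne_zero : ∀ a b c d : Fin 9, a ≠ b → a ≠ c → a ≠ d → b ≠ c → b ≠ d → c ≠ d →
    d4aux a b c d ≠ 0 := by decide

theorem AQ_entry_cast : ∀ i j, AQ i j = ((AZaux i j : ℤ) : ℝ) := by
  intro i j; fin_cases i <;> fin_cases j <;> norm_num [AQ, AZaux]

theorem det4_formula (M : Matrix (Fin 4) (Fin 4) ℝ) : M.det =
    M 0 0 * (M 1 1*(M 2 2*M 3 3 - M 2 3*M 3 2) - M 1 2*(M 2 1*M 3 3 - M 2 3*M 3 1) + M 1 3*(M 2 1*M 3 2 - M 2 2*M 3 1))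
  - M 0 1 * (M 1 0*(M 2 2*M 3 3 - M 2 3*M 3 2) - M 1 2*(M 2 0*M 3 3 - M 2 3*M 3 0) + M 1 3*(M 2 0*M 3 2 - M 2 2*M 3 0))
  + M 0 2 * (M 1 0*(M 2 1*M 3 3 - M 2 3*M 3 1) - M 1 1*(M 2 0*M 3 3 - M 2 3*M 3 0) + M 1 3*(M 2 0*M 3 1 - M 2 1*M 3 0))
  - M 0 3 * (M 1 0*(M 2 1*M 3 2 - M 2 2*M 3 1) - M 1 1*(M 2 0*M 3 2 - M 2 2*M 3 0) + M 1 2*(M 2 0*M 3 1 - M 2 1*M 3 0)) := by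
  have h1 : Fin.succ (2 : Fin 3) = (3 : Fin 4) := rfl
  have h2 : Fin.castSucc (2 : Fin 3) = (2 : Fin 4) := rfl
  rw [Matrix.det_succ_row_zero]
  have h3 : Fin.succAbove (1 : Fin 4) (2 : Fin 3) = 3 := rfl
  have h4 : Fin.succAbove (2 : Fin 4) (2 : Fin 3) = 3 := rfl
  have h5 : Fin.succAbove (3 : Fin 4) (2 : Fin 3) = 2 := rfl
  simp [Fin.sum_univ_succ, Matrix.det_fin_three, Fin.succAbove_zero, Fin.succ_succAbove_zero,
    Fin.succ_succAbove_succ, h3, h4, h5]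
  ring

theorem det_submatrix_cast (f : Fin 4 → Fin 9) :
    (AQ.submatrix f id).det = ((d4aux (f 0) (f 1) (f 2) (f 3) : ℤ) : ℝ) := by
  rw [det4_formula]
  simp only [Matrix.submatrix_apply, id_eq, AQ_entry_cast, d4aux]
  push_cast
  ring

theorem AQ_det_ne_zero (f : Fin 4 → Fin 9) (hf : Function.Injective f) :
    (AQ.submatrix f id).det ≠ 0 := by
  rw [det_submatrix_cast]
  exact_mod_cast d4aux_ne_zero (f 0) (f 1) (f 2) (f 3)
    (fun h => by simpa using hf h) (fun h => by simpa using hf h)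
    (fun h => by simpa using hf h) (fun h => by simpa using hf h)
    (fun h => by simpa using hf h) (fun h => by simpa using hf h)

/-- Every `4 × 4` submatrix of `A_Q` (obtained by selecting 4 of its 9 rows) is nonsingular;
consequently every `3 × 4` submatrix of `A_Q` has rank 3. -/
theorem AQ_submatrices_nonsingular :
    (∀ f : Fin 4 → Fin 9, Function.Injective f → (AQ.submatrix f id).det ≠ 0) ∧
    (∀ f : Fin 3 → Fin 9, Function.Injective f → (AQ.submatrix f id).rank = 3) := by
  constructor
  · exact AQ_det_ne_zero
  · intro f hf
    obtain ⟨x, hx⟩ : ∃ x : Fin 9, ∀ i, f i ≠ x := by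
      by_contra h
      push_neg at h
      have hsurj : Function.Surjective f := fun x => h x
      have := Fintype.card_le_of_surjective f hsurj
      simp at this
    set g : Fin 4 → Fin 9 := Fin.snoc f x with hg
    have hginj : Function.Injective g := by
      intro i j hij
      induction i using Fin.lastCases with
      | last =>
        induction j using Fin.lastCases with
        | last => rfl
        | cast j =>
          simp only [hg, Fin.snoc_last, Fin.snoc_castSucc] at hij
          exact absurd hij.symm (hx j)
      | cast i =>
        induction j using Fin.lastCases with
        | last =>
          simp only [hg, Fin.snoc_last, Fin.snoc_castSucc] at hij
          exact absurd hij (hx i)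
        | cast j =>
          simp only [hg, Fin.snoc_castSucc] at hij
          exact congrArg Fin.castSucc (hf hij)
    have hdet : IsUnit (AQ.submatrix g id) := by
      rw [Matrix.isUnit_iff_isUnit_det, isUnit_iff_ne_zero]
      exact AQ_det_ne_zero g hginj
    have hli : LinearIndependent ℝ (fun i => (AQ.submatrix g id) i) :=
      Matrix.linearIndependent_rows_iff_isUnit.2 hdet
    have hli3 : LinearIndependent ℝ (fun i => (AQ.submatrix f id) i) := by
      have := hli.comp Fin.castSucc (Fin.castSucc_injective 3)
      convert this using 1
      funext i
      funext j
      simp [hg, Matrix.submatrix_apply, Fin.snoc_castSucc]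
    have := hli3.rank_matrix
    rw [Fintype.card_fin] at this
    exact this
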